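/- Let N be a nilpotent endomorphism of a finite-dimensional vector space V over a field of characteristic zero. Then there exists at most one finite increasing filtration W of V such that N(W_k) ⊆ W_{k-2} for all k and such that N^k: gr^W_k V → gr^W_{-k} V is an isomorphism for all k ≥ 0. -/

import Mathlib

/-- `W` is a monodromy weight filtration (centered at 0) for `N`: a finite increasing
filtration with `N (W k) ⊆ W (k-2)` such that `N^k` induces an isomorphism
`gr^W_k V ≅ gr^W_{-k} V` for all `k ≥ 0` (encoded by surjectivity and injectivity
conditions on submodules). -/
def IsMonodromyWeightFiltration {K V : Type*} [Field K] [AddCommGroup V] [Module K V]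
    (N : Module.End K V) (W : ℤ → Submodule K V) : Prop :=
  Monotone W ∧ (∃ a, W a = ⊥) ∧ (∃ b, W b = ⊤) ∧
  (∀ k : ℤ, Submodule.map N (W k) ≤ W (k - 2)) ∧
  (∀ k : ℕ,
    W (-(k : ℤ)) ≤ Submodule.map (N ^ k : Module.End K V) (W (k : ℤ)) ⊔ W (-(k : ℤ) - 1) ∧
    W (k : ℤ) ⊓ Submodule.comap (N ^ k : Module.End K V) (W (-(k : ℤ) - 1)) ≤ W ((k : ℤ) - 1))

/-!
The defining conditions determine `W` recursively from the outside in: for `k ≥ 0`,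
`W k = W (k + 1) ⊓ (N ^ (k + 1))⁻¹ (W (-k - 2))` and
`W (-k - 1) = N ^ (k + 1) (W (k + 1)) ⊔ W (-k - 2)`,
the inclusions `⊆` resp. `⊇` coming from `N ^ (k + 1)` lowering weights by `2k + 2` and the other
ones from the injectivity resp. surjectivity of `N ^ (k + 1) : gr_{k+1} → gr_{-k-1}`.
Two such filtrations agree for `|k|` large, since both are finite, hence everywhere by descending
induction.
-/

namespace IsMonodromyWeightFiltration

variable {K V : Type*} [Field K] [AddCommGroup V] [Module K V] {N : Module.End K V}
  {W W' : ℤ → Submodule K V}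

lemma map_pow_le (hW : IsMonodromyWeightFiltration N W) (n : ℕ) (j : ℤ) :
    (W j).map (N ^ n) ≤ W (j - 2 * n) := by
  induction n generalizing j with
  | zero => simp [Module.End.one_eq_id]
  | succ n ih =>
    rw [pow_succ, Module.End.mul_eq_comp, Submodule.map_comp]
    calc ((W j).map N).map (N ^ n) ≤ (W (j - 2)).map (N ^ n) := Submodule.map_mono (hW.2.2.2.1 j)
      _ ≤ W (j - 2 - 2 * n) := ih _
      _ = W (j - 2 * (n + 1 : ℕ)) := by congr 1; push_cast; ring

lemma eq_inf_comap (hW : IsMonodromyWeightFiltration N W) (k : ℕ) :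
    W k = W (k + 1) ⊓ (W (-k - 2)).comap (N ^ (k + 1)) := by
  apply le_antisymm
  · refine le_inf (hW.1 (by omega)) fun x hx => hW.1 ?_ (hW.map_pow_le (k + 1) k ⟨x, hx, rfl⟩)
    push_cast; omega
  · convert (hW.2.2.2.2 (k + 1)).2 using 3 <;> push_cast <;> ring_nf

lemma eq_map_sup (hW : IsMonodromyWeightFiltration N W) (k : ℕ) :
    W (-k - 1) = (W (k + 1)).map (N ^ (k + 1)) ⊔ W (-k - 2) := by
  apply le_antisymm
  · convert (hW.2.2.2.2 (k + 1)).1 using 3 <;> push_cast <;> ring_nf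
  · refine sup_le ((hW.map_pow_le (k + 1) (k + 1)).trans (hW.1 ?_)) (hW.1 (by omega))
    push_cast; omega

lemma exists_eq_top_and_eq_bot (hW : IsMonodromyWeightFiltration N W) :
    ∃ M : ℕ, ∀ k : ℕ, M ≤ k → W k = ⊤ ∧ W (-k - 1) = ⊥ := by
  obtain ⟨hmono, ⟨a, ha⟩, ⟨b, hb⟩, -⟩ := hW
  refine ⟨b.toNat ⊔ (-a).toNat, fun k hk =>
    ⟨top_le_iff.mp (hb ▸ hmono ?_), le_bot_iff.mp (ha ▸ hmono ?_)⟩⟩ <;> omega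

theorem unique (hW : IsMonodromyWeightFiltration N W) (hW' : IsMonodromyWeightFiltration N W') :
    W = W' := by
  obtain ⟨M, hM⟩ := hW.exists_eq_top_and_eq_bot
  obtain ⟨M', hM'⟩ := hW'.exists_eq_top_and_eq_bot
  have agree : ∀ d k : ℕ, M ⊔ M' ≤ k + d → W k = W' k ∧ W (-k - 1) = W' (-k - 1) := by
    intro d
    induction d with
    | zero =>
      intro k hk
      rw [(hM k (by omega)).1, (hM' k (by omega)).1, (hM k (by omega)).2, (hM' k (by omega)).2]
      exact ⟨rfl, rfl⟩
    | succ d ih =>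
      intro k hk
      obtain ⟨hpos, hneg⟩ := ih (k + 1) (by omega)
      have hneg' : W (-k - 2) = W' (-k - 2) := by convert hneg using 2 <;> push_cast <;> ring
      push_cast at hpos
      rw [hW.eq_inf_comap, hW'.eq_inf_comap, hW.eq_map_sup, hW'.eq_map_sup, hpos, hneg']
      exact ⟨rfl, rfl⟩
  funext j
  cases j with
  | ofNat k => exact (agree (M ⊔ M') k (by omega)).1
  | negSucc k =>
    rw [show Int.negSucc k = -k - 1 by omega]
    exact (agree (M ⊔ M') k (by omega)).2

end IsMonodromyWeightFiltration

theorem stmt10_general {K V : Type*} [Field K] [AddCommGroup V] [Module K V]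
    (N : Module.End K V)
    (W W' : ℤ → Submodule K V)
    (hW : IsMonodromyWeightFiltration N W) (hW' : IsMonodromyWeightFiltration N W') :
    W = W' :=
  hW.unique hW'

/-- Uniqueness of the monodromy weight filtration: a nilpotent endomorphism `N` of a
finite-dimensional vector space over a field of characteristic zero admits at most one
finite increasing filtration `W` with `N (W k) ⊆ W (k-2)` for all `k` and with `N^k`
inducing isomorphisms `gr^W_k V ≅ gr^W_{-k} V` for all `k ≥ 0`. -/
theorem stmt10 {K V : Type*} [Field K] [CharZero K] [AddCommGroup V] [Module K V]
    [FiniteDimensional K V] (N : Module.End K V) (hnil : IsNilpotent N)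
    (W W' : ℤ → Submodule K V)
    (hW : IsMonodromyWeightFiltration N W) (hW' : IsMonodromyWeightFiltration N W') :
    W = W' :=
  stmt10_general N W W' hW hW'
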